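/- arXiv:0803.1454 — 5 statements merged into one kernel-verified Lean document; each statement's English description precedes it below -/
import Mathlib

section
/- Let X be a real random variable with a symmetric distribution (X and −X have the same law) and finite second moment, and let g : ℝ → ℝ be three times continuously differentiable with suitable integrability. Then E[X g(X)] = E[X² g'(X)] − (1/4) E[ |X| ∫_{−|X|}^{|X|} (X² − u²) g'''(u) du ]. -/
open MeasureTheory ProbabilityTheory

lemma inner_ibp (g : ℝ → ℝ) (hg : ContDiff ℝ 3 g) (a : ℝ) :
    ∫ u in (-a)..a, (a ^ 2 - u ^ 2) * iteratedDeriv 3 g u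
      = 2 * a * (deriv g a + deriv g (-a)) - 2 * (g a - g (-a)) := by
  have h3 : ContDiff ℝ ((2:ℕ∞)+1) g := by exact_mod_cast hg
  rw [contDiff_succ_iff_deriv] at h3
  have hdg : ContDiff ℝ ((1:ℕ∞)+1) (deriv g) := by exact_mod_cast h3.2.2
  rw [contDiff_succ_iff_deriv] at hdg
  have hddg : ContDiff ℝ ((0:ℕ∞)+1) (deriv (deriv g)) := by exact_mod_cast hdg.2.2
  rw [contDiff_succ_iff_deriv] at hddg
  have c3 : Continuous (iteratedDeriv 3 g) := hg.continuous_iteratedDeriv 3 (le_refl _)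
  have e3 : iteratedDeriv 3 g = deriv (deriv (deriv g)) := by
    rw [show (3:ℕ) = 2 + 1 from rfl, iteratedDeriv_succ,
      show (2:ℕ) = 1 + 1 from rfl, iteratedDeriv_succ, iteratedDeriv_one]
  have cdg : Continuous (deriv g) := h3.2.2.continuous
  have cddg : Continuous (deriv (deriv g)) := hdg.2.2.continuous
  -- first IBP
  have ibp1 : ∫ u in (-a)..a, (a ^ 2 - u ^ 2) * iteratedDeriv 3 g u
      = - ∫ u in (-a)..a, (-(2 * u)) * deriv (deriv g) u := by
    have := intervalIntegral.integral_mul_deriv_eq_deriv_mul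
      (u := fun x => a ^ 2 - x ^ 2) (u' := fun x => -(2 * x))
      (v := deriv (deriv g)) (v' := iteratedDeriv 3 g) (a := -a) (b := a)
      (fun x _ => by
        have : HasDerivAt (fun x : ℝ => a ^ 2 - x ^ 2) (0 - 2 * x) x :=
          (hasDerivAt_const x (a ^ 2)).sub (by simpa using (hasDerivAt_pow 2 x))
        simpa using this)
      (fun x _ => by
        rw [e3]
        exact (hddg.1 x).hasDerivAt)
      ((Continuous.neg (by continuity)).intervalIntegrable _ _)
      (c3.intervalIntegrable _ _)
    rw [this]; norm_num
  -- second IBP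
  have ibp2 : ∫ u in (-a)..a, (2 * u) * deriv (deriv g) u
      = 2 * a * deriv g a - (2 * (-a)) * deriv g (-a) - ∫ u in (-a)..a, 2 * deriv g u := by
    exact intervalIntegral.integral_mul_deriv_eq_deriv_mul
      (u := fun x => 2 * x) (u' := fun _ => (2:ℝ))
      (v := deriv g) (v' := deriv (deriv g))
      (fun x _ => by simpa using (hasDerivAt_id x).const_mul 2)
      (fun x _ => (hdg.1 x).hasDerivAt)
      ((continuous_const).intervalIntegrable _ _)
      (cddg.intervalIntegrable _ _)
  have fund : ∫ u in (-a)..a, deriv g u = g a - g (-a) :=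
    intervalIntegral.integral_deriv_eq_sub
      (fun x _ => h3.1 x) (cdg.intervalIntegrable _ _)
  have hconst : ∫ u in (-a)..a, 2 * deriv g u = 2 * (g a - g (-a)) := by
    rw [intervalIntegral.integral_const_mul, fund]
  have hneg : ∫ u in (-a)..a, (-(2 * u)) * deriv (deriv g) u
      = - ∫ u in (-a)..a, (2 * u) * deriv (deriv g) u := by
    rw [← intervalIntegral.integral_neg]; congr 1; ext u; ring
  rw [ibp1, hneg, neg_neg, ibp2, hconst]; ring

lemma pointwise_id (g : ℝ → ℝ) (hg : ContDiff ℝ 3 g) (x : ℝ) :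
    x * g x + (-x) * g (-x)
      = x ^ 2 * deriv g x + x ^ 2 * deriv g (-x)
        - (1 / 2) * (|x| * ∫ u in (-|x|)..(|x|), (x ^ 2 - u ^ 2) * iteratedDeriv 3 g u) := by
  have h := inner_ibp g hg |x|
  rw [sq_abs] at h
  rw [h]
  rcases abs_cases x with ⟨h1, _⟩ | ⟨h1, _⟩
  · rw [h1]; ring
  · rw [h1]; simp only [neg_neg]; ring

/-- Generalized integration-by-parts formula for a symmetric random variable `X` with finite
second moment and a `C³` function `g`:
`E[X g(X)] = E[X² g'(X)] − (1/4) E[ |X| ∫_{−|X|}^{|X|} (X² − u²) g'''(u) du ]`. -/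
theorem symmetric_integration_by_parts
    {Ω : Type*} [MeasurableSpace Ω] (μ : Measure Ω) [IsProbabilityMeasure μ]
    (X : Ω → ℝ) (hXm : Measurable X)
    (hsym : Measure.map X μ = Measure.map (fun ω => -X ω) μ)
    (hX2 : Integrable (fun ω => (X ω) ^ 2) μ)
    (g : ℝ → ℝ) (hg : ContDiff ℝ 3 g)
    (h1 : Integrable (fun ω => X ω * g (X ω)) μ)
    (h2 : Integrable (fun ω => (X ω) ^ 2 * deriv g (X ω)) μ)
    (h3 : Integrable (fun ω =>
      (|X ω| * ∫ u in (-|X ω|)..(|X ω|), ((X ω) ^ 2 - u ^ 2) * iteratedDeriv 3 g u)) μ) :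
    ∫ ω, X ω * g (X ω) ∂μ
      = ∫ ω, (X ω) ^ 2 * deriv g (X ω) ∂μ
        - (1 / 4) * ∫ ω,
            (|X ω| * ∫ u in (-|X ω|)..(|X ω|), ((X ω) ^ 2 - u ^ 2) * iteratedDeriv 3 g u) ∂μ := by
  have h3' : ContDiff ℝ ((2:ℕ∞)+1) g := by exact_mod_cast hg
  rw [contDiff_succ_iff_deriv] at h3'
  have cg : Continuous g := hg.continuous
  have cdg : Continuous (deriv g) := h3'.2.2.continuous
  have hnm : Measurable (fun ω => -X ω) := hXm.neg
  -- transport lemma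
  have transport : ∀ F : ℝ → ℝ, Continuous F →
      (∫ ω, F (X ω) ∂μ = ∫ ω, F (-X ω) ∂μ) ∧
      (Integrable (fun ω => F (X ω)) μ → Integrable (fun ω => F (-X ω)) μ) := by
    intro F hF
    constructor
    · calc ∫ ω, F (X ω) ∂μ = ∫ x, F x ∂(Measure.map X μ) :=
            (integral_map hXm.aemeasurable hF.aestronglyMeasurable).symm
        _ = ∫ x, F x ∂(Measure.map (fun ω => -X ω) μ) := by rw [hsym]
        _ = ∫ ω, F (-X ω) ∂μ := integral_map hnm.aemeasurable hF.aestronglyMeasurable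
    · intro hI
      have := (integrable_map_measure hF.aestronglyMeasurable hXm.aemeasurable).mpr hI
      rw [hsym] at this
      exact (integrable_map_measure hF.aestronglyMeasurable hnm.aemeasurable).mp this
  -- symmetry identities
  have F1 : Continuous (fun x : ℝ => x * g x) := continuous_id.mul cg
  have F2 : Continuous (fun x : ℝ => x ^ 2 * deriv g x) := (continuous_pow 2).mul cdg
  have E1 : ∫ ω, X ω * g (X ω) ∂μ = ∫ ω, (-X ω) * g (-X ω) ∂μ :=
    (transport _ F1).1
  have I1 : Integrable (fun ω => (-X ω) * g (-X ω)) μ := (transport _ F1).2 h1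
  have E2 : ∫ ω, (X ω) ^ 2 * deriv g (X ω) ∂μ = ∫ ω, (-X ω) ^ 2 * deriv g (-X ω) ∂μ :=
    (transport _ F2).1
  have I2 : Integrable (fun ω => (-X ω) ^ 2 * deriv g (-X ω)) μ := (transport _ F2).2 h2
  have E2' : ∫ ω, (-X ω) ^ 2 * deriv g (-X ω) ∂μ = ∫ ω, (X ω) ^ 2 * deriv g (-X ω) ∂μ := by
    congr 1; ext ω; rw [neg_pow]; ring
  have I2' : Integrable (fun ω => (X ω) ^ 2 * deriv g (-X ω)) μ := by
    have : (fun ω => (X ω) ^ 2 * deriv g (-X ω)) = fun ω => (-X ω) ^ 2 * deriv g (-X ω) := by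
      ext ω; rw [neg_pow]; ring
    rw [this]; exact I2
  -- integrate the pointwise identity
  have key : ∫ ω, (X ω * g (X ω) + (-X ω) * g (-X ω)) ∂μ
      = ∫ ω, ((X ω) ^ 2 * deriv g (X ω) + (X ω) ^ 2 * deriv g (-X ω)
          - (1 / 2) * (|X ω| * ∫ u in (-|X ω|)..(|X ω|),
              ((X ω) ^ 2 - u ^ 2) * iteratedDeriv 3 g u)) ∂μ := by
    congr 1; ext ω; exact pointwise_id g hg (X ω)
  have hsum : Integrable (fun ω => (X ω) ^ 2 * deriv g (X ω)
      + (X ω) ^ 2 * deriv g (-X ω)) μ := h2.add I2'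
  have hhalf : Integrable (fun ω => (1 / 2 : ℝ) * (|X ω| * ∫ u in (-|X ω|)..(|X ω|),
      ((X ω) ^ 2 - u ^ 2) * iteratedDeriv 3 g u)) μ := h3.const_mul _
  rw [integral_add h1 I1, integral_sub hsum hhalf, integral_add h2 I2',
    MeasureTheory.integral_const_mul, ← E1, E2'.symm.trans E2.symm] at key
  linarith [key]
end

section
/- Let X be a symmetric random variable with E[X²] = 1 and g : ℝ → ℝ three times continuously differentiable with suitable integrability. Then E[X g(X)] = E[g'(X)] + E[(X² − 1) ∫_0^X g''(u) du] − (1/4) E[ |X| ∫_{−|X|}^{|X|} (X² − u²) g'''(u) du ]. -/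
/-!
Both correction terms have closed forms: `∫₀ˣ g'' = g'(x) - g'(0)`, and two integrations by
parts give `|x| ∫_{-|x|}^{|x|} (x² - u²) g'''(u) du = 2 (H(x) + H(-x))` with
`H(x) = x² g'(x) - x g(x)`.
Taking expectations, `E[X²] = 1` turns the first term into `E[X² g'(X)] - E[g'(X)]` and the
symmetry of `X` turns the second into `4 E[X² g'(X)] - 4 E[X g(X)]`; the identity follows.
-/

open MeasureTheory ProbabilityTheory

section Calculus

variable {g : ℝ → ℝ}

theorem hasDerivAt_iteratedDeriv {n : WithTop ℕ∞} {m : ℕ} (hg : ContDiff ℝ n g) (hm : m < n)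
    (x : ℝ) : HasDerivAt (iteratedDeriv m g) (iteratedDeriv (m + 1) g x) x := by
  rw [iteratedDeriv_succ]
  exact (hg.differentiable_iteratedDeriv m hm x).hasDerivAt

theorem integral_iteratedDeriv_succ {n : WithTop ℕ∞} {m : ℕ} (hg : ContDiff ℝ n g) (hm : m < n)
    (a b : ℝ) :
    ∫ u in a..b, iteratedDeriv (m + 1) g u = iteratedDeriv m g b - iteratedDeriv m g a :=
  intervalIntegral.integral_eq_sub_of_hasDerivAt (fun x _ ↦ hasDerivAt_iteratedDeriv hg hm x)
    ((hg.continuous_iteratedDeriv (m + 1)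
      (ENat.add_one_natCast_le_withTop_of_lt hm)).intervalIntegrable a b)

theorem integral_sq_sub_sq_mul_iteratedDeriv_three (hg : ContDiff ℝ 3 g) (t a b : ℝ) :
    ∫ u in a..b, (t ^ 2 - u ^ 2) * iteratedDeriv 3 g u
      = (t ^ 2 - b ^ 2) * iteratedDeriv 2 g b - (t ^ 2 - a ^ 2) * iteratedDeriv 2 g a
        + 2 * (b * deriv g b - a * deriv g a) - 2 * (g b - g a) := by
  have hsq : ∀ x ∈ Set.uIcc a b, HasDerivAt (fun u : ℝ ↦ t ^ 2 - u ^ 2) (-(2 * x)) x :=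
    fun x _ ↦ by simpa using (hasDerivAt_pow 2 x).const_sub (t ^ 2)
  have hlin : ∀ x ∈ Set.uIcc a b, HasDerivAt (fun u : ℝ ↦ 2 * u) 2 x := fun x _ ↦ by
    simpa using (hasDerivAt_id x).const_mul (2 : ℝ)
  have hint : ∀ k : ℕ, k ≤ 3 → IntervalIntegrable (iteratedDeriv k g) volume a b :=
    fun k hk ↦ (hg.continuous_iteratedDeriv k (by exact_mod_cast hk)).intervalIntegrable a b
  rw [intervalIntegral.integral_mul_deriv_eq_deriv_mul hsq
      (fun x _ ↦ hasDerivAt_iteratedDeriv hg (m := 2) (by norm_num) x)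
      (by apply Continuous.intervalIntegrable; fun_prop) (hint 3 le_rfl)]
  simp only [neg_mul, intervalIntegral.integral_neg]
  rw [intervalIntegral.integral_mul_deriv_eq_deriv_mul hlin
      (fun x _ ↦ hasDerivAt_iteratedDeriv hg (m := 1) (by norm_num) x)
      intervalIntegrable_const (hint 2 (by norm_num)),
    intervalIntegral.integral_const_mul,
    integral_iteratedDeriv_succ hg (m := 0) (by norm_num)]
  simp only [iteratedDeriv_one, iteratedDeriv_zero]
  ring

theorem abs_mul_integral_sq_sub_sq_mul_iteratedDeriv_three (hg : ContDiff ℝ 3 g) (x : ℝ) :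
    |x| * ∫ u in (-|x|)..(|x|), (x ^ 2 - u ^ 2) * iteratedDeriv 3 g u
      = 2 * ((x ^ 2 * deriv g x - x * g x) + ((-x) ^ 2 * deriv g (-x) - (-x) * g (-x))) := by
  have h := integral_sq_sub_sq_mul_iteratedDeriv_three hg |x| (-|x|) |x|
  rw [sq_abs] at h
  rw [h]
  rcases abs_cases x with ⟨hx, _⟩ | ⟨hx, _⟩ <;> simp only [hx, neg_neg] <;> ring

end Calculus

section Expectation

variable {Ω : Type*} [MeasurableSpace Ω] {μ : Measure Ω}

theorem integrable_mul_of_integrable_sub_one_mul_sub_const [IsFiniteMeasure μ] {Y Z : Ω → ℝ}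
    {c : ℝ} (hY : Integrable Y μ) (hZ : Integrable Z μ)
    (h : Integrable (fun ω ↦ (Y ω - 1) * (Z ω - c)) μ) :
    Integrable (fun ω ↦ Y ω * Z ω) μ :=
  ((h.add hZ).add ((hY.sub (integrable_const 1)).const_mul c)).congr
    (ae_of_all _ fun ω ↦ by simp only [Pi.add_apply, Pi.sub_apply]; ring)

theorem integral_sub_one_mul_sub_const [IsProbabilityMeasure μ] {Y Z : Ω → ℝ} (c : ℝ)
    (hY : Integrable Y μ) (hY1 : ∫ ω, Y ω ∂μ = 1) (hZ : Integrable Z μ)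
    (hYZ : Integrable (fun ω ↦ Y ω * Z ω) μ) :
    ∫ ω, (Y ω - 1) * (Z ω - c) ∂μ = ∫ ω, Y ω * Z ω ∂μ - ∫ ω, Z ω ∂μ := by
  have hYZ_Z : Integrable (fun ω ↦ Y ω * Z ω - Z ω) μ := hYZ.sub hZ
  have hY_1 : Integrable (fun ω ↦ Y ω - 1) μ := hY.sub (integrable_const 1)
  have hsplit : ∀ ω, (Y ω - 1) * (Z ω - c) = Y ω * Z ω - Z ω - c * (Y ω - 1) :=
    fun ω ↦ by ring
  simp only [hsplit]
  rw [integral_sub hYZ_Z (hY_1.const_mul c), integral_sub hYZ hZ, integral_const_mul,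
    integral_sub hY (integrable_const 1), hY1]
  simp

theorem integral_add_comp_neg_of_identDistrib {X : Ω → ℝ}
    (hX : IdentDistrib X (fun ω ↦ -X ω) μ μ) {F : ℝ → ℝ} (hF : Measurable F)
    (hi : Integrable (fun ω ↦ F (X ω)) μ) :
    ∫ ω, (F (X ω) + F (-X ω)) ∂μ = 2 * ∫ ω, F (X ω) ∂μ := by
  have hi' : Integrable (fun ω ↦ F (-X ω)) μ := (hX.comp hF).integrable_snd hi
  have heq : ∫ ω, F (-X ω) ∂μ = ∫ ω, F (X ω) ∂μ := (hX.comp hF).integral_eq.symm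
  rw [integral_add hi hi', heq, two_mul]

end Expectation

theorem symmetric_integration_by_parts_unit_variance_general
    {Ω : Type*} [MeasurableSpace Ω] (μ : Measure Ω) [IsProbabilityMeasure μ]
    (X : Ω → ℝ) (hXm : Measurable X)
    (hsym : Measure.map X μ = Measure.map (fun ω => -X ω) μ)
    (hX2 : Integrable (fun ω => (X ω) ^ 2) μ)
    (hvar : ∫ ω, (X ω) ^ 2 ∂μ = 1)
    (g : ℝ → ℝ) (hg : ContDiff ℝ 3 g)
    (h1 : Integrable (fun ω => X ω * g (X ω)) μ)
    (h2 : Integrable (fun ω => deriv g (X ω)) μ)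
    (h3 : Integrable (fun ω =>
      (((X ω) ^ 2 - 1) * ∫ u in (0:ℝ)..(X ω), iteratedDeriv 2 g u)) μ) :
    ∫ ω, X ω * g (X ω) ∂μ
      = (∫ ω, deriv g (X ω) ∂μ)
        + (∫ ω, (((X ω) ^ 2 - 1) * ∫ u in (0:ℝ)..(X ω), iteratedDeriv 2 g u) ∂μ)
        - (1 / 4) * ∫ ω,
            (|X ω| * ∫ u in (-|X ω|)..(|X ω|), ((X ω) ^ 2 - u ^ 2) * iteratedDeriv 3 g u) ∂μ := by
  have hXsymm : IdentDistrib X (fun ω ↦ -X ω) μ μ :=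
    ⟨hXm.aemeasurable, hXm.neg.aemeasurable, hsym⟩
  have hgm : Measurable g := hg.continuous.measurable
  have hftc : ∀ x, ∫ u in (0:ℝ)..x, iteratedDeriv 2 g u = deriv g x - deriv g 0 := fun x ↦ by
    simpa using integral_iteratedDeriv_succ hg (m := 1) (by norm_num) 0 x
  simp only [hftc, abs_mul_integral_sq_sub_sq_mul_iteratedDeriv_three hg] at h3 ⊢
  have hsq_deriv : Integrable (fun ω ↦ X ω ^ 2 * deriv g (X ω)) μ :=
    integrable_mul_of_integrable_sub_one_mul_sub_const hX2 h2 h3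
  rw [integral_sub_one_mul_sub_const _ hX2 hvar h2 hsq_deriv, integral_const_mul,
    integral_add_comp_neg_of_identDistrib hXsymm (F := fun x ↦ x ^ 2 * deriv g x - x * g x)
      (by fun_prop) (hsq_deriv.sub h1),
    integral_sub hsq_deriv h1]
  ring

/-- For a symmetric random variable `X` with `E[X²] = 1` and `g ∈ C³`:
`E[X g(X)] = E[g'(X)] + E[(X² − 1) ∫_0^X g''] − (1/4) E[|X| ∫_{−|X|}^{|X|} (X² − u²) g'''(u) du]`. -/
theorem symmetric_integration_by_parts_unit_variance
    {Ω : Type*} [MeasurableSpace Ω] (μ : Measure Ω) [IsProbabilityMeasure μ]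
    (X : Ω → ℝ) (hXm : Measurable X)
    (hsym : Measure.map X μ = Measure.map (fun ω => -X ω) μ)
    (hX2 : Integrable (fun ω => (X ω) ^ 2) μ)
    (hvar : ∫ ω, (X ω) ^ 2 ∂μ = 1)
    (g : ℝ → ℝ) (hg : ContDiff ℝ 3 g)
    (h1 : Integrable (fun ω => X ω * g (X ω)) μ)
    (h2 : Integrable (fun ω => deriv g (X ω)) μ)
    (h3 : Integrable (fun ω =>
      (((X ω) ^ 2 - 1) * ∫ u in (0:ℝ)..(X ω), iteratedDeriv 2 g u)) μ)
    (h4 : Integrable (fun ω =>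
      (|X ω| * ∫ u in (-|X ω|)..(|X ω|), ((X ω) ^ 2 - u ^ 2) * iteratedDeriv 3 g u)) μ) :
    ∫ ω, X ω * g (X ω) ∂μ
      = (∫ ω, deriv g (X ω) ∂μ)
        + (∫ ω, (((X ω) ^ 2 - 1) * ∫ u in (0:ℝ)..(X ω), iteratedDeriv 2 g u) ∂μ)
        - (1 / 4) * ∫ ω,
            (|X ω| * ∫ u in (-|X ω|)..(|X ω|), ((X ω) ^ 2 - u ^ 2) * iteratedDeriv 3 g u) ∂μ :=
  symmetric_integration_by_parts_unit_variance_general μ X hXm hsym hX2 hvar g hg h1 h2 h3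
end

section
/- Let Z_u = (1/2^K) Σ_{x ∈ {−1,1}^K} exp(H(x) + h_u(x)) where h_u(x) = √u Σ_k h_k x_k + u Σ_k x_k⁰ x_k − √u Σ_k |h_k|, with fixed reals h_k, fixed x⁰ ∈ {−1,1}^K, and H any fixed real-valued function on {−1,1}^K. Then the free energy f(u) = (1/K) ln Z_u is a convex function of u on (0,∞). -/
/-!
Each exponent `H(x) + √u (Σ h_k x_k − Σ |h_k|) + u Σ x⁰_k x_k` is a convex function of `u`, because
`√u` is concave and its coefficient is nonpositive. By Hölder's inequality `log Σ exp` of convex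
functions is convex, and neither adding `log 2^{-K}` nor scaling by `1/K ≥ 0` destroys convexity.
-/

open Real

/-- Spin value of a boolean configuration entry: `true ↦ 1`, `false ↦ −1`. -/
noncomputable def spinVal : Bool → ℝ := fun b => if b then 1 else -1

open Finset Set

theorem Real.sum_rpow_mul_rpow_le {ι : Type*} (s : Finset ι) {f g : ι → ℝ}
    (hf : ∀ i ∈ s, 0 ≤ f i) (hg : ∀ i ∈ s, 0 ≤ g i) {a b : ℝ} (ha : 0 < a) (hb : 0 < b)
    (hab : a + b = 1) :
    ∑ i ∈ s, f i ^ a * g i ^ b ≤ (∑ i ∈ s, f i) ^ a * (∑ i ∈ s, g i) ^ b := by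
  have := inner_le_Lp_mul_Lq_of_nonneg s (holderConjugate_one_div ha hb hab)
    (fun i hi => rpow_nonneg (hf i hi) a) (fun i hi => rpow_nonneg (hg i hi) b)
  simp only [one_div, inv_inv] at this
  convert this using 3 <;> refine sum_congr rfl fun i hi => ?_
  · exact (rpow_rpow_inv (hf i hi) ha.ne').symm
  · exact (rpow_rpow_inv (hg i hi) hb.ne').symm

theorem convexOn_log_sum_exp {ι E : Type*} [Fintype ι] [Nonempty ι] [AddCommGroup E]
    [Module ℝ E] {s : Set E} {g : ι → E → ℝ} (hg : ∀ i, ConvexOn ℝ s (g i)) :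
    ConvexOn ℝ s (fun x => log (∑ i, exp (g i x))) := by
  have hs : Convex ℝ s := (hg (Classical.arbitrary ι)).1
  refine convexOn_iff_forall_pos.2 ⟨hs, fun x hx y hy a b ha hb hab => ?_⟩
  have hpos : ∀ z, 0 < ∑ i, exp (g i z) := fun z => sum_pos (fun i _ => exp_pos _) univ_nonempty
  have hexp : ∀ i, exp (g i (a • x + b • y)) ≤ exp (g i x) ^ a * exp (g i y) ^ b := fun i => by
    rw [← exp_mul, ← exp_mul, ← exp_add, mul_comm _ a, mul_comm _ b]
    exact exp_le_exp.2 ((hg i).2 hx hy ha.le hb.le hab)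
  calc log (∑ i, exp (g i (a • x + b • y)))
      ≤ log ((∑ i, exp (g i x)) ^ a * (∑ i, exp (g i y)) ^ b) :=
        log_le_log (hpos _) <| (sum_le_sum fun i _ => hexp i).trans <|
          sum_rpow_mul_rpow_le _ (fun i _ => (exp_pos _).le) (fun i _ => (exp_pos _).le) ha hb hab
    _ = a • log (∑ i, exp (g i x)) + b • log (∑ i, exp (g i y)) := by
        rw [log_mul (rpow_pos_of_pos (hpos x) a).ne' (rpow_pos_of_pos (hpos y) b).ne',
          log_rpow (hpos x), log_rpow (hpos y), smul_eq_mul, smul_eq_mul]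

theorem convexOn_add_sqrt_mul_add_mul_sub_sqrt_mul {A C : ℝ} (hAC : A ≤ C) (E B : ℝ) :
    ConvexOn ℝ (Ici 0) (fun u => E + √u * A + u * B - √u * C) := by
  have hsqrt : ConvexOn ℝ (Ici 0) (fun u : ℝ => (C - A) • -√u) :=
    strictConcaveOn_sqrt.concaveOn.neg.smul (sub_nonneg.2 hAC)
  have hlin : ConvexOn ℝ (Ici 0) (fun u : ℝ => B * u + E) :=
    ((LinearMap.mul ℝ ℝ B).convexOn (convex_Ici 0)).add_const E
  exact (hsqrt.add hlin).congr fun u _ => by simp only [Pi.add_apply, smul_eq_mul]; ring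

theorem abs_spinVal (b : Bool) : |spinVal b| = 1 := by
  cases b <;> simp [spinVal]

theorem sum_mul_spinVal_le_sum_abs {ι : Type*} (s : Finset ι) (h : ι → ℝ) (σ : ι → Bool) :
    ∑ k ∈ s, h k * spinVal (σ k) ≤ ∑ k ∈ s, |h k| :=
  sum_le_sum fun k _ => (le_abs_self _).trans (by rw [abs_mul, abs_spinVal, mul_one])

theorem free_energy_perturbation_convex_general
    (K : ℕ) (H : (Fin K → ℝ) → ℝ) (h : Fin K → ℝ)
    (x0 : Fin K → ℝ) :
    ConvexOn ℝ (Set.Ioi (0 : ℝ)) (fun u =>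
      (1 / (K : ℝ)) * Real.log ((1 / 2 ^ K) * ∑ s : Fin K → Bool,
        Real.exp (H (fun k => spinVal (s k))
          + Real.sqrt u * ∑ k, h k * spinVal (s k)
          + u * ∑ k, x0 k * spinVal (s k)
          - Real.sqrt u * ∑ k, |h k|))) := by
  have hexponent (s : Fin K → Bool) := (convexOn_add_sqrt_mul_add_mul_sub_sqrt_mul
    (sum_mul_spinVal_le_sum_abs univ h s) (H fun k => spinVal (s k))
    (∑ k, x0 k * spinVal (s k))).subset Ioi_subset_Ici_self (convex_Ioi 0)
  refine (((convexOn_log_sum_exp hexponent).add_const (log (1 / 2 ^ K))).smul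
    (by positivity : (0 : ℝ) ≤ 1 / K)).congr fun u _ => ?_
  simp only [Pi.add_apply, smul_eq_mul]
  rw [log_mul (by positivity) (sum_pos (fun s _ => exp_pos _) univ_nonempty).ne',
    add_comm]

/-- The free energy `u ↦ (1/K) ln Z_u` of the Gibbs partition function with the perturbation
`h_u(x) = √u Σ h_k x_k + u Σ x⁰_k x_k − √u Σ |h_k|` is a convex function of `u` on `(0,∞)`. -/
theorem free_energy_perturbation_convex
    (K : ℕ) (hK : 0 < K) (H : (Fin K → ℝ) → ℝ) (h : Fin K → ℝ)
    (x0 : Fin K → ℝ) (hx0 : ∀ k, x0 k = 1 ∨ x0 k = -1) :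
    ConvexOn ℝ (Set.Ioi (0 : ℝ)) (fun u =>
      (1 / (K : ℝ)) * Real.log ((1 / 2 ^ K) * ∑ s : Fin K → Bool,
        Real.exp (H (fun k => spinVal (s k))
          + Real.sqrt u * ∑ k, h k * spinVal (s k)
          + u * ∑ k, x0 k * spinVal (s k)
          - Real.sqrt u * ∑ k, |h k|))) :=
  free_energy_perturbation_convex_general K H h x0
end

section
/- Let n, m ∈ ℝ^N with max_i |n_i| ≤ √A and max_i |m_i| ≤ √A, and let S, T be N×K real matrices such that ‖S⁰ y‖² ≤ BN and ‖T⁰ y‖² ≤ BN for all y ∈ {−2,0,2}^K (where S⁰, T⁰ are obtained by multiplying column k by x_k⁰ ∈ {±1}). Then for all x ∈ {−1,1}^K, |‖N^{−1/2} S⁰(x−1) − σn‖² − ‖N^{−1/2} T⁰(x−1) − σm‖²| ≤ 2(2√β + σ)(σ√(NA) + √B) · ‖(n,S) − (m,T)‖, where β = K/N and ‖(n,S)−(m,T)‖ is the Euclidean norm on ℝ^N × ℝ^{NK}. -/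
/-!
Write `u` and `v` for the two vectors `N^{-1/2} S⁰(x - 1) - σn` and `N^{-1/2} T⁰(x - 1) - σm`.
Then `|‖u‖² - ‖v‖²| ≤ ‖u - v‖ (‖u‖ + ‖v‖)`. The hypotheses give `‖u‖, ‖v‖ ≤ σ√(NA) + √B`
directly, while `u - v = N^{-1/2} (S - T)⁰(x - 1) - σ(n - m)` is bounded by Cauchy–Schwarz in
each row of `S - T`, since `(x⁰_k (x_k - 1))_k` has entries in `{-2, 0, 2}` and so norm at most `2√K`.
-/

open Real Finset Matrix

lemma abs_sq_norm_sub_sq_norm_le {E : Type*} [SeminormedAddCommGroup E] (u v : E) :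
    |‖u‖ ^ 2 - ‖v‖ ^ 2| ≤ ‖u - v‖ * (‖u‖ + ‖v‖) := by
  rw [sq_sub_sq, abs_mul, abs_of_nonneg (by positivity), mul_comm]
  exact mul_le_mul_of_nonneg_right (abs_norm_sub_norm_le u v) (by positivity)

section
variable {ι κ : Type*} [Fintype ι] [Fintype κ]

lemma EuclideanSpace.norm_le_sqrt_card_mul {c : ℝ} (w : EuclideanSpace ℝ ι)
    (h : ∀ i, |w i| ≤ c) : ‖w‖ ≤ √(Fintype.card ι) * c := by
  rcases isEmpty_or_nonempty ι with hι | ⟨⟨i₀⟩⟩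
  · simp [Subsingleton.elim w 0]
  have hc : 0 ≤ c := (abs_nonneg _).trans (h i₀)
  have hsq : ∑ i, w i ^ 2 ≤ Fintype.card ι * c ^ 2 := by
    simpa [sq_abs] using
      sum_le_sum fun i (_ : i ∈ univ) => pow_le_pow_left₀ (abs_nonneg (w i)) (h i) 2
  rw [EuclideanSpace.norm_eq, ← sqrt_sq hc, ← sqrt_mul (Nat.cast_nonneg _)]
  simpa using sqrt_le_sqrt hsq

lemma EuclideanSpace.norm_toLp_mulVec_le (M : Matrix ι κ ℝ) (v : κ → ℝ) :
    ‖WithLp.toLp 2 (M *ᵥ v)‖ ≤ √(∑ i, ∑ k, M i k ^ 2) * ‖WithLp.toLp 2 v‖ := by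
  have hrows : ∑ i, (M *ᵥ v) i ^ 2 ≤ (∑ i, ∑ k, M i k ^ 2) * ‖WithLp.toLp 2 v‖ ^ 2 := by
    rw [EuclideanSpace.real_norm_sq_eq, sum_mul]
    exact sum_le_sum fun i _ => sum_mul_sq_le_sq_mul_sq _ _ _
  rw [← sqrt_sq (norm_nonneg (WithLp.toLp 2 (M *ᵥ v))), EuclideanSpace.real_norm_sq_eq,
    ← sqrt_sq (norm_nonneg (WithLp.toLp 2 v)), ← sqrt_mul (by positivity)]
  exact sqrt_le_sqrt hrows

end

section
variable {N K : ℕ} {σ : ℝ} {x0 x : Fin K → ℝ}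

noncomputable def cdmaResidual (σ : ℝ) (x0 x : Fin K → ℝ) (S : Fin N → Fin K → ℝ)
    (n : Fin N → ℝ) : EuclideanSpace ℝ (Fin N) :=
  (1 / √N) • WithLp.toLp 2 (fun i => ∑ k, S i k * x0 k * (x k - 1)) - σ • WithLp.toLp 2 n

lemma norm_sq_cdmaResidual (S : Fin N → Fin K → ℝ) (n : Fin N → ℝ) :
    ‖cdmaResidual σ x0 x S n‖ ^ 2
      = ∑ i, ((1 / √N) * (∑ k, S i k * x0 k * (x k - 1)) - σ * n i) ^ 2 := by
  simp [cdmaResidual, EuclideanSpace.real_norm_sq_eq]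

lemma norm_cdmaResidual_le {A B : ℝ} (hN : 0 < N) (hσ : 0 ≤ σ) {S : Fin N → Fin K → ℝ}
    {n : Fin N → ℝ} (hn : ∀ i, |n i| ≤ √A)
    (hS : ∑ i, (∑ k, S i k * x0 k * (x k - 1)) ^ 2 ≤ B * N) :
    ‖cdmaResidual σ x0 x S n‖ ≤ σ * √(N * A) + √B := by
  have hSx : ‖WithLp.toLp 2 (fun i => ∑ k, S i k * x0 k * (x k - 1))‖ ≤ √B * √N := by
    rw [← sqrt_mul' B (Nat.cast_nonneg N), ← sqrt_sq (norm_nonneg _),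
      EuclideanSpace.real_norm_sq_eq]
    exact sqrt_le_sqrt hS
  have hn' : ‖WithLp.toLp 2 n‖ ≤ √N * √A := by
    simpa using EuclideanSpace.norm_le_sqrt_card_mul (WithLp.toLp 2 n) hn
  have hN' : 0 < √N := sqrt_pos.mpr (Nat.cast_pos.mpr hN)
  calc ‖cdmaResidual σ x0 x S n‖
      ≤ 1 / √N * ‖WithLp.toLp 2 (fun i => ∑ k, S i k * x0 k * (x k - 1))‖
        + σ * ‖WithLp.toLp 2 n‖ := by
        refine (norm_sub_le _ _).trans_eq ?_
        rw [norm_smul, norm_smul, norm_of_nonneg (by positivity), norm_of_nonneg hσ]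
    _ ≤ 1 / √N * (√B * √N) + σ * (√N * √A) := by gcongr
    _ = σ * √(N * A) + √B := by
        rw [sqrt_mul (Nat.cast_nonneg N)]
        field_simp
        ring

lemma norm_cdmaResidual_sub_le (hσ : 0 ≤ σ) (hx0 : ∀ k, x0 k = 1 ∨ x0 k = -1)
    (hx : ∀ k, x k = 1 ∨ x k = -1) (S T : Fin N → Fin K → ℝ) (n m : Fin N → ℝ) :
    ‖cdmaResidual σ x0 x S n - cdmaResidual σ x0 x T m‖
      ≤ (2 * √((K : ℝ) / N) + σ) * √(∑ i, (n i - m i) ^ 2 + ∑ i, ∑ k, (S i k - T i k) ^ 2) := by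
  set D := √(∑ i, (n i - m i) ^ 2 + ∑ i, ∑ k, (S i k - T i k) ^ 2)
  have hsign : ‖WithLp.toLp 2 (x0 * (x - 1))‖ ≤ √K * 2 := by
    refine (EuclideanSpace.norm_le_sqrt_card_mul (c := 2) _ fun k => ?_).trans_eq (by simp)
    rcases hx0 k with h0 | h0 <;> rcases hx k with h | h <;> norm_num [h0, h]
  have hST : √(∑ i, ∑ k, (S - T) i k ^ 2) ≤ D := by
    simp only [Pi.sub_apply]
    exact sqrt_le_sqrt (le_add_of_nonneg_left (by positivity))
  have hnm : ‖WithLp.toLp 2 (n - m)‖ ≤ D := by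
    simp only [EuclideanSpace.norm_eq, Pi.sub_apply, norm_eq_abs, sq_abs]
    exact sqrt_le_sqrt (le_add_of_nonneg_right (by positivity))
  have hdiff : cdmaResidual σ x0 x S n - cdmaResidual σ x0 x T m
      = (1 / √N) • WithLp.toLp 2 ((S - T) *ᵥ (x0 * (x - 1))) - σ • WithLp.toLp 2 (n - m) := by
    ext i
    simp only [cdmaResidual, mulVec, dotProduct, PiLp.sub_apply, PiLp.smul_apply, Pi.sub_apply,
      Pi.mul_apply, Pi.one_apply, smul_eq_mul, sub_mul, mul_assoc, sum_sub_distrib]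
    ring
  calc ‖cdmaResidual σ x0 x S n - cdmaResidual σ x0 x T m‖
      ≤ 1 / √N * (√(∑ i, ∑ k, (S - T) i k ^ 2) * ‖WithLp.toLp 2 (x0 * (x - 1))‖)
        + σ * ‖WithLp.toLp 2 (n - m)‖ := by
        rw [hdiff]
        refine (norm_sub_le _ _).trans ?_
        rw [norm_smul, norm_smul, norm_of_nonneg (by positivity), norm_of_nonneg hσ]
        gcongr
        exact EuclideanSpace.norm_toLp_mulVec_le _ _
    _ ≤ 1 / √N * (D * (√K * 2)) + σ * D := by gcongr
    _ = (2 * √((K : ℝ) / N) + σ) * D := by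
        rw [sqrt_div' _ (Nat.cast_nonneg N)]
        ring

end

theorem hamiltonian_lipschitz_bound_general
    (N K : ℕ) (hN : 0 < N)
    (σ A B : ℝ) (hσ : 0 < σ)
    (n m : Fin N → ℝ) (S T : Fin N → Fin K → ℝ) (x0 : Fin K → ℝ)
    (hx0 : ∀ k, x0 k = 1 ∨ x0 k = -1)
    (hn : ∀ i, |n i| ≤ Real.sqrt A) (hm : ∀ i, |m i| ≤ Real.sqrt A)
    (hS : ∀ y : Fin K → ℝ, (∀ k, y k = -2 ∨ y k = 0 ∨ y k = 2) →
      ∑ i, (∑ k, S i k * x0 k * y k) ^ 2 ≤ B * N)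
    (hT : ∀ y : Fin K → ℝ, (∀ k, y k = -2 ∨ y k = 0 ∨ y k = 2) →
      ∑ i, (∑ k, T i k * x0 k * y k) ^ 2 ≤ B * N) :
    ∀ x : Fin K → ℝ, (∀ k, x k = 1 ∨ x k = -1) →
      |(∑ i, ((1 / Real.sqrt N) * (∑ k, S i k * x0 k * (x k - 1)) - σ * n i) ^ 2)
          - ∑ i, ((1 / Real.sqrt N) * (∑ k, T i k * x0 k * (x k - 1)) - σ * m i) ^ 2|
        ≤ 2 * (2 * Real.sqrt ((K : ℝ) / N) + σ) * (σ * Real.sqrt (N * A) + Real.sqrt B)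
          * Real.sqrt ((∑ i, (n i - m i) ^ 2) + ∑ i, ∑ k, (S i k - T i k) ^ 2) := by
  intro x hx
  have hy : ∀ k, x k - 1 = -2 ∨ x k - 1 = 0 ∨ x k - 1 = 2 := fun k => by
    rcases hx k with h | h <;> norm_num [h]
  have hu := norm_cdmaResidual_le hN hσ.le hn (hS _ hy)
  have hv := norm_cdmaResidual_le hN hσ.le hm (hT _ hy)
  rw [← norm_sq_cdmaResidual, ← norm_sq_cdmaResidual]
  calc _ ≤ ‖cdmaResidual σ x0 x S n - cdmaResidual σ x0 x T m‖
        * (‖cdmaResidual σ x0 x S n‖ + ‖cdmaResidual σ x0 x T m‖) :=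
        abs_sq_norm_sub_sq_norm_le _ _
    _ ≤ (2 * √((K : ℝ) / N) + σ) * √(∑ i, (n i - m i) ^ 2 + ∑ i, ∑ k, (S i k - T i k) ^ 2)
        * ((σ * √(N * A) + √B) + (σ * √(N * A) + √B)) := by
        gcongr
        exact norm_cdmaResidual_sub_le hσ.le hx0 hx S T n m
    _ = _ := by ring

/-- Lipschitz estimate for the CDMA Hamiltonian: under bounds `max|n_i|, max|m_i| ≤ √A` and
`‖S⁰y‖², ‖T⁰y‖² ≤ BN` for all `y ∈ {−2,0,2}^K`, the difference of the squared norms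
`‖N^{−1/2}S⁰(x−1) − σn‖²` and `‖N^{−1/2}T⁰(x−1) − σm‖²` is bounded by
`2(2√β + σ)(σ√(NA) + √B)‖(n,S) − (m,T)‖`, with `β = K/N`. -/
theorem hamiltonian_lipschitz_bound
    (N K : ℕ) (hN : 0 < N) (hK : 0 < K)
    (σ A B : ℝ) (hσ : 0 < σ) (hA : 0 < A) (hB : 0 < B)
    (n m : Fin N → ℝ) (S T : Fin N → Fin K → ℝ) (x0 : Fin K → ℝ)
    (hx0 : ∀ k, x0 k = 1 ∨ x0 k = -1)
    (hn : ∀ i, |n i| ≤ Real.sqrt A) (hm : ∀ i, |m i| ≤ Real.sqrt A)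
    (hS : ∀ y : Fin K → ℝ, (∀ k, y k = -2 ∨ y k = 0 ∨ y k = 2) →
      ∑ i, (∑ k, S i k * x0 k * y k) ^ 2 ≤ B * N)
    (hT : ∀ y : Fin K → ℝ, (∀ k, y k = -2 ∨ y k = 0 ∨ y k = 2) →
      ∑ i, (∑ k, T i k * x0 k * y k) ^ 2 ≤ B * N) :
    ∀ x : Fin K → ℝ, (∀ k, x k = 1 ∨ x k = -1) →
      |(∑ i, ((1 / Real.sqrt N) * (∑ k, S i k * x0 k * (x k - 1)) - σ * n i) ^ 2)
          - ∑ i, ((1 / Real.sqrt N) * (∑ k, T i k * x0 k * (x k - 1)) - σ * m i) ^ 2|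
        ≤ 2 * (2 * Real.sqrt ((K : ℝ) / N) + σ) * (σ * Real.sqrt (N * A) + Real.sqrt B)
          * Real.sqrt ((∑ i, (n i - m i) ^ 2) + ∑ i, ∑ k, (S i k - T i k) ^ 2) :=
  hamiltonian_lipschitz_bound_general N K hN σ A B hσ n m S T x0 hx0 hn hm hS hT
end

section
/- For β > 0, σ > 0, define the Gaussian-input replica functional c_RS(m) = (1/2) ln(1+λ) − (1/(2β)) ln(λσ²) − (λ/2)(1−m) with λ = (σ² + β(1−m))^{−1}. The stationarity condition m = λ/(1+λ) has the explicit solution m = (σ²/(4β)) Q(σ^{−2}, β), where Q(x,z) = (√(x(1+√z)²+1) − √(x(1−√z)²+1))². -/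
open Real

/-- For the Gaussian-input replica functional, the stationarity condition `m = λ/(1+λ)` with
`λ = (σ² + β(1−m))⁻¹` is solved explicitly by `m = (σ²/(4β)) Q(σ⁻², β)` where
`Q(x,z) = (√(x(1+√z)²+1) − √(x(1−√z)²+1))²`. -/
theorem gaussian_replica_fixed_point_solution
    (σ β : ℝ) (hσ : 0 < σ) (hβ : 0 < β)
    (Q m lam : ℝ)
    (hQ : Q = (Real.sqrt ((1 / σ ^ 2) * (1 + Real.sqrt β) ^ 2 + 1)
      - Real.sqrt ((1 / σ ^ 2) * (1 - Real.sqrt β) ^ 2 + 1)) ^ 2)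
    (hm : m = σ ^ 2 / (4 * β) * Q)
    (hlam : lam = (σ ^ 2 + β * (1 - m))⁻¹) :
    m = lam / (1 + lam) := by
  set a := Real.sqrt ((1 / σ ^ 2) * (1 + Real.sqrt β) ^ 2 + 1) with ha
  set b := Real.sqrt ((1 / σ ^ 2) * (1 - Real.sqrt β) ^ 2 + 1) with hb
  have hσ2 : (0:ℝ) < σ ^ 2 := by positivity
  have hσne : σ ^ 2 ≠ 0 := ne_of_gt hσ2
  have hβne : β ≠ 0 := ne_of_gt hβ
  have ha2 : σ ^ 2 * a ^ 2 = (1 + Real.sqrt β) ^ 2 + σ ^ 2 := by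
    rw [ha, sq_sqrt (by positivity)]
    field_simp
  have hb2 : σ ^ 2 * b ^ 2 = (1 - Real.sqrt β) ^ 2 + σ ^ 2 := by
    rw [hb, sq_sqrt (by positivity)]
    field_simp
  have hβs : (Real.sqrt β) ^ 2 = β := sq_sqrt hβ.le
  have hm2 : 4 * β * m = σ ^ 2 * (a - b) ^ 2 := by
    rw [hm, hQ]
    field_simp
  have hm'' : 2 * β * m = σ ^ 2 + β + 1 - σ ^ 2 * (a * b) := by
    linear_combination (1/2) * hm2 + (1/2) * ha2 + (1/2) * hb2 + hβs
  have habsq : (σ ^ 2 * (a * b)) ^ 2 = (σ ^ 2 + β + 1) ^ 2 - 4 * β := by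
    linear_combination (σ ^ 2 * b ^ 2) * ha2 + ((1 + Real.sqrt β) ^ 2 + σ ^ 2) * hb2
      + (2 * σ ^ 2 - 2 + (Real.sqrt β) ^ 2 + β) * hβs
  have key4 : 4 * β * (β * m ^ 2 - (σ ^ 2 + β + 1) * m + 1) = 0 := by
    linear_combination (2 * β * m + (σ ^ 2 + β + 1) - σ ^ 2 * (a * b)
      - 2 * (σ ^ 2 + β + 1)) * hm'' + habsq
  have key : β * m ^ 2 - (σ ^ 2 + β + 1) * m + 1 = 0 := by
    rcases mul_eq_zero.mp key4 with h | h
    · exfalso; nlinarith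
    · exact h
  have hD : m * (σ ^ 2 + β * (1 - m)) = 1 - m := by nlinarith [key]
  have hD1 : m * (σ ^ 2 + β * (1 - m) + 1) = 1 := by nlinarith [hD]
  have hDne : σ ^ 2 + β * (1 - m) ≠ 0 := by
    intro h
    rw [h, mul_zero] at hD
    have hm1 : m = 1 := by linarith
    rw [hm1] at h
    norm_num at h
    exact hσ.ne' h
  have hD1ne : σ ^ 2 + β * (1 - m) + 1 ≠ 0 := by
    intro h
    rw [h, mul_zero] at hD1
    norm_num at hD1
  have hlamne : lam ≠ 0 := by rw [hlam]; exact inv_ne_zero hDne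
  have hlam' : 1 + lam = (σ ^ 2 + β * (1 - m) + 1) * lam := by
    rw [hlam]
    field_simp
  rw [hlam']
  rw [mul_comm, ← div_div, div_self hlamne]
  rw [eq_div_iff hD1ne]
  linarith [hD1]
end
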